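/- arXiv:math/0211007 — 6 statements merged into one kernel-verified Lean document; each statement's English description precedes it below -/
import Mathlib

section
/- Jacobi triple product: for |q| > 1 and p = q^{-1}, one has Θ_q(z) = (p;p)_∞ (z;p)_∞ (p z^{-1};p)_∞ for all z ∈ ℂ*, where (x;p)_∞ = Π_{k≥0}(1 - x p^k). -/
/-!
Cauchy's `q`-binomial theorem `(x;p)_m = ∑ₖ [m k]_p (-x)^k p^(k choose 2)`, applied to
`(z p^(-N); p)_(2N)` and split into its two halves, gives the finite triple product
`(z;p)_N (p/z;p)_N = ∑_{|n| ≤ N} [2N, N+n]_p θₙ(z)` with `θₙ(z) = (-1)^n p^(n(n-1)/2) z^n`.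
Since `[a+b, a]_p = (p;p)_(a+b) / ((p;p)_a (p;p)_b)`, the central Gaussian binomials tend to
`(p;p)_∞⁻¹` and are uniformly bounded, while `∑ |θₙ(z)|` converges; Tannery's theorem lets
`N → ∞`.
-/

/-- The Jacobi theta function `Θ_q(z) = Σ_{n ∈ ℤ} (-1)^n q^{-n(n-1)/2} z^n` (for `|q| > 1`). -/
noncomputable def jTheta (q z : ℂ) : ℂ :=
  ∑' n : ℤ, (-1 : ℂ) ^ n * q ^ (-(n * (n - 1) / 2)) * z ^ n

/-- The infinite `q`-Pochhammer symbol `(x;p)_∞ = Π_{k ≥ 0} (1 - x p^k)` (for `|p| < 1`). -/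
noncomputable def qPochInf (x p : ℂ) : ℂ := ∏' k : ℕ, (1 - x * p ^ k)

open Finset Filter Topology

section CommRing

variable {R : Type*} [CommRing R]

def qPoch (x p : R) (m : ℕ) : R := ∏ i ∈ range m, (1 - x * p ^ i)

def gaussBinom (p : R) : ℕ → ℕ → R
  | _, 0 => 1
  | 0, _ + 1 => 0
  | m + 1, k + 1 => gaussBinom p m k + p ^ (k + 1) * gaussBinom p m (k + 1)

lemma qPoch_zero (x p : R) : qPoch x p 0 = 1 := prod_range_zero _

lemma qPoch_succ (x p : R) (m : ℕ) : qPoch x p (m + 1) = qPoch x p m * (1 - x * p ^ m) :=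
  prod_range_succ _ _

lemma qPoch_succ' (x p : R) (m : ℕ) : qPoch x p (m + 1) = (1 - x) * qPoch (x * p) p m := by
  simp only [qPoch, prod_range_succ', pow_succ', pow_zero, mul_one, ← mul_assoc, mul_comm]

lemma qPoch_add (x p : R) (m n : ℕ) :
    qPoch x p (m + n) = qPoch x p m * qPoch (x * p ^ m) p n := by
  simp only [qPoch, prod_range_add, pow_add, mul_assoc]

lemma gaussBinom_zero_right (p : R) (m : ℕ) : gaussBinom p m 0 = 1 := by
  cases m <;> rfl

lemma gaussBinom_succ_succ (p : R) (m k : ℕ) :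
    gaussBinom p (m + 1) (k + 1) = gaussBinom p m k + p ^ (k + 1) * gaussBinom p m (k + 1) :=
  rfl

lemma gaussBinom_eq_zero_of_lt {p : R} : ∀ {m k : ℕ}, m < k → gaussBinom p m k = 0
  | 0, _ + 1, _ => rfl
  | m + 1, k + 1, h => by
    rw [gaussBinom_succ_succ, gaussBinom_eq_zero_of_lt (by omega),
      gaussBinom_eq_zero_of_lt (by omega), mul_zero, add_zero]

lemma gaussBinom_self (p : R) : ∀ m, gaussBinom p m m = 1
  | 0 => rfl
  | m + 1 => by
    rw [gaussBinom_succ_succ, gaussBinom_self p m, gaussBinom_eq_zero_of_lt m.lt_succ_self,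
      mul_zero, add_zero]

theorem gaussBinom_add_mul_qPoch (p : R) (a b : ℕ) :
    gaussBinom p (a + b) a * qPoch p p a * qPoch p p b = qPoch p p (a + b) := by
  induction a generalizing b with
  | zero => simp [gaussBinom_zero_right, qPoch_zero]
  | succ a iha =>
    induction b with
    | zero => simp [gaussBinom_self, qPoch_zero]
    | succ b ihb =>
      have h₁ : gaussBinom p (a + b + 1) a * qPoch p p a * qPoch p p (b + 1)
          = qPoch p p (a + b + 1) := iha (b + 1)
      have h₂ : gaussBinom p (a + b + 1) (a + 1) * qPoch p p (a + 1) * qPoch p p b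
          = qPoch p p (a + b + 1) := by rw [show a + b + 1 = a + 1 + b by ring]; exact ihb
      rw [qPoch_succ p p b] at h₁
      rw [qPoch_succ p p a] at h₂
      rw [show a + 1 + (b + 1) = a + b + 1 + 1 by ring, gaussBinom_succ_succ,
        qPoch_succ p p (a + b + 1), qPoch_succ p p a, qPoch_succ p p b]
      linear_combination (1 - p * p ^ a) * h₁ + p ^ (a + 1) * (1 - p * p ^ b) * h₂

theorem qPoch_eq_sum_gaussBinom (x p : R) (m : ℕ) :
    qPoch x p m = ∑ k ∈ range (m + 1), gaussBinom p m k * (-x) ^ k * p ^ k.choose 2 := by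
  induction m generalizing x with
  | zero => simp [qPoch_zero, gaussBinom_zero_right]
  | succ m ih =>
    have htail : ∑ k ∈ range (m + 1), p ^ (k + 1) * gaussBinom p m (k + 1) * (-x) ^ (k + 1)
        * p ^ (k + 1).choose 2 = qPoch (x * p) p m - 1 := by
      have hext : qPoch (x * p) p m = ∑ k ∈ range (m + 1 + 1),
          gaussBinom p m k * (-(x * p)) ^ k * p ^ k.choose 2 := by
        rw [ih, sum_range_succ _ (m + 1), gaussBinom_eq_zero_of_lt m.lt_succ_self, zero_mul,
          zero_mul, add_zero]
      rw [hext, sum_range_succ' _ (m + 1), gaussBinom_zero_right, Nat.choose_zero_succ,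
        pow_zero, pow_zero, mul_one, mul_one, add_sub_cancel_right]
      exact sum_congr rfl fun k _ => by ring
    have hhead : ∑ k ∈ range (m + 1), gaussBinom p m k * (-x) ^ (k + 1) * p ^ (k + 1).choose 2
        = -x * qPoch (x * p) p m := by
      rw [ih, mul_sum]
      exact sum_congr rfl fun k _ => by
        rw [Nat.choose_succ_succ', Nat.choose_one_right]; ring
    rw [qPoch_succ', sum_range_succ' _ (m + 1)]
    simp only [gaussBinom_succ_succ, add_mul, sum_add_distrib, htail, hhead,
      gaussBinom_zero_right, Nat.choose_zero_succ]
    ring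

end CommRing

section Field

variable {K : Type*} [Field K]

def thetaTerm (p z : K) (n : ℤ) : K := (-1) ^ n * p ^ (n * (n - 1) / 2) * z ^ n

lemma mul_pred_ediv_two_mul_two (n : ℤ) : n * (n - 1) / 2 * 2 = n * (n - 1) :=
  Int.ediv_mul_cancel (Int.even_mul_pred_self n).two_dvd

lemma thetaTerm_natCast (p z : K) (k : ℕ) : thetaTerm p z k = (-z) ^ k * p ^ k.choose 2 := by
  have hk : (k : ℤ) * (k - 1) / 2 = (k.choose 2 : ℕ) := by
    rw [Nat.choose_two_right, Int.natCast_div]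
    rcases k with _ | k <;> simp
  rw [thetaTerm, hk, zpow_natCast, zpow_natCast, zpow_natCast, neg_pow z]
  ring

lemma thetaTerm_natCast_eq_prod (p z : K) (N : ℕ) :
    thetaTerm p z N = ∏ j ∈ range N, -(z * p ^ j) := by
  rw [thetaTerm_natCast, prod_neg, prod_mul_distrib, prod_const, card_range,
    prod_pow_eq_pow_sum, sum_range_id, ← Nat.choose_two_right, neg_pow z, mul_assoc]

lemma thetaTerm_add {p z : K} (hp : p ≠ 0) (hz : z ≠ 0) (m n : ℤ) :
    thetaTerm p z (m + n) = thetaTerm p z m * thetaTerm p (z * p ^ m) n := by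
  have he : (m + n) * (m + n - 1) / 2 = m * (m - 1) / 2 + n * (n - 1) / 2 + m * n := by
    have := mul_pred_ediv_two_mul_two (m + n)
    have := mul_pred_ediv_two_mul_two m
    have := mul_pred_ediv_two_mul_two n
    linarith
  simp only [thetaTerm, he, mul_zpow, ← zpow_mul, zpow_add₀ hp, zpow_add₀ hz,
    zpow_add₀ (neg_ne_zero.mpr one_ne_zero : (-1 : K) ≠ 0)]
  ring

lemma thetaTerm_neg {p : K} (hp : p ≠ 0) (z : K) (n : ℤ) :
    thetaTerm p z (-n) = thetaTerm p (p * z⁻¹) n := by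
  have he : -n * (-n - 1) / 2 = n * (n - 1) / 2 + n := by
    have := mul_pred_ediv_two_mul_two (-n)
    have := mul_pred_ediv_two_mul_two n
    linarith
  have hsign : ((-1 : K) ^ n)⁻¹ = (-1) ^ n := by rw [← inv_zpow, inv_neg, inv_one]
  simp only [thetaTerm, he, mul_zpow, zpow_add₀ hp, zpow_neg, inv_zpow, hsign]
  ring

lemma thetaTerm_ne_zero {p z : K} (hp : p ≠ 0) (hz : z ≠ 0) (n : ℤ) :
    thetaTerm p z n ≠ 0 := by
  simp [thetaTerm, zpow_ne_zero, hp, hz]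

lemma qPoch_mul_inv_pow {p z : K} (hp : p ≠ 0) (hz : z ≠ 0) (N : ℕ) :
    qPoch (z * (p ^ N)⁻¹) p N = thetaTerm p (z * (p ^ N)⁻¹) N * qPoch (p * z⁻¹) p N := by
  have hfactor : ∀ j ∈ range N, 1 - z * (p ^ N)⁻¹ * p ^ j
      = -(z * (p ^ N)⁻¹ * p ^ j) * (1 - z⁻¹ * p ^ (N - 1 - j + 1)) := by
    intro j hj
    rw [show N - 1 - j + 1 = N - j by have := mem_range.mp hj; omega,
      ← pow_sub_mul_pow p (mem_range.mp hj).le]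
    field_simp
    ring
  rw [qPoch, prod_congr rfl hfactor, prod_mul_distrib, thetaTerm_natCast_eq_prod, qPoch,
    prod_range_reflect (fun i => 1 - z⁻¹ * p ^ (i + 1)) N]
  simp only [pow_succ', mul_comm p, mul_assoc]

theorem qPoch_mul_qPoch_eq_sum_gaussBinom_mul_thetaTerm {p z : K} (hp : p ≠ 0) (hz : z ≠ 0)
    (N : ℕ) : qPoch z p N * qPoch (p * z⁻¹) p N
      = ∑ n ∈ Icc (-(N : ℤ)) N, gaussBinom p (2 * N) (n + N).toNat * thetaTerm p z n := by
  set x := z * (p ^ N)⁻¹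
  have hx : x ≠ 0 := mul_ne_zero hz (inv_ne_zero (pow_ne_zero N hp))
  have hxz : x * p ^ N = z := inv_mul_cancel_right₀ (pow_ne_zero N hp) z
  refine mul_left_cancel₀ (thetaTerm_ne_zero hp hx N) ?_
  calc thetaTerm p x N * (qPoch z p N * qPoch (p * z⁻¹) p N)
      = qPoch x p (N + N) := by rw [qPoch_add, qPoch_mul_inv_pow hp hz, hxz]; ring
    _ = ∑ k ∈ range (2 * N + 1), gaussBinom p (2 * N) k * thetaTerm p x k := by
      simp only [two_mul, qPoch_eq_sum_gaussBinom, thetaTerm_natCast, mul_assoc]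
    _ = ∑ k ∈ range (2 * N + 1),
          thetaTerm p x N * (gaussBinom p (2 * N) k * thetaTerm p z (k - N)) := by
      refine sum_congr rfl fun k _ => ?_
      rw [mul_left_comm, ← hxz, ← zpow_natCast, ← thetaTerm_add hp hx, add_sub_cancel]
    _ = thetaTerm p x N *
          ∑ n ∈ Icc (-(N : ℤ)) N, gaussBinom p (2 * N) (n + N).toNat * thetaTerm p z n := by
      rw [← mul_sum]
      congr 1
      refine sum_nbij' (fun k => (k : ℤ) - N) (fun n => (n + N).toNat) ?_ ?_ ?_ ?_ ?_ <;>
        intro k hk <;> simp only [mem_range, mem_Icc] at hk ⊢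
      · omega
      · omega
      · omega
      · omega
      · simp

end Field

section Analysis

variable {K : Type*} [NormedField K] {p : K}

lemma summable_norm_mul_pow (hp : ‖p‖ < 1) (x : K) : Summable fun k => ‖x * p ^ k‖ := by
  simpa [norm_mul, norm_pow] using
    (summable_geometric_of_lt_one (norm_nonneg p) hp).mul_left ‖x‖

lemma multipliable_one_sub_mul_pow [CompleteSpace K] (hp : ‖p‖ < 1) (x : K) :
    Multipliable fun k => 1 - x * p ^ k := by
  simpa [sub_eq_add_neg] using multipliable_one_add_of_summable (f := fun k => -(x * p ^ k))
    (by simpa using summable_norm_mul_pow hp x)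

lemma tendsto_qPoch [CompleteSpace K] (hp : ‖p‖ < 1) (x : K) :
    Tendsto (qPoch x p) atTop (𝓝 (∏' k, (1 - x * p ^ k))) :=
  (multipliable_one_sub_mul_pow hp x).hasProd.tendsto_prod_nat

lemma one_sub_mul_pow_self_ne_zero (hp : ‖p‖ < 1) (k : ℕ) : 1 - p * p ^ k ≠ 0 := by
  refine sub_ne_zero.mpr fun h => ?_
  have : ‖p‖ ^ (k + 1) < 1 := pow_lt_one₀ (norm_nonneg p) hp k.succ_ne_zero
  rw [← norm_pow, pow_succ', ← h, norm_one] at this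
  exact this.false

lemma qPoch_self_ne_zero (hp : ‖p‖ < 1) (m : ℕ) : qPoch p p m ≠ 0 :=
  prod_ne_zero_iff.mpr fun k _ => one_sub_mul_pow_self_ne_zero hp k

lemma tprod_one_sub_mul_pow_self_ne_zero [CompleteSpace K] (hp : ‖p‖ < 1) :
    ∏' k, (1 - p * p ^ k) ≠ 0 := by
  simpa [sub_eq_add_neg] using tprod_one_add_ne_zero_of_summable (f := fun k => -(p * p ^ k))
    (by simpa [← sub_eq_add_neg] using one_sub_mul_pow_self_ne_zero hp)
    (by simpa using summable_norm_mul_pow hp p)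

lemma gaussBinom_add_eq_div (hp : ‖p‖ < 1) (a b : ℕ) :
    gaussBinom p (a + b) a = qPoch p p (a + b) / (qPoch p p a * qPoch p p b) := by
  rw [eq_div_iff (mul_ne_zero (qPoch_self_ne_zero hp a) (qPoch_self_ne_zero hp b)),
    ← mul_assoc, gaussBinom_add_mul_qPoch]

lemma exists_norm_gaussBinom_le [CompleteSpace K] (hp : ‖p‖ < 1) :
    ∃ C, ∀ m k, ‖gaussBinom p m k‖ ≤ C := by
  have hP := tendsto_qPoch hp p
  obtain ⟨A, hA⟩ := isBounded_iff_forall_norm_le.mp (Metric.isBounded_range_of_tendsto _ hP)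
  obtain ⟨B, hB⟩ := isBounded_iff_forall_norm_le.mp
    (Metric.isBounded_range_of_tendsto _ (hP.inv₀ (tprod_one_sub_mul_pow_self_ne_zero hp)))
  have hA0 : 0 ≤ A := (norm_nonneg _).trans (hA _ ⟨0, rfl⟩)
  have hB0 : 0 ≤ B := (norm_nonneg _).trans (hB _ ⟨0, rfl⟩)
  refine ⟨A * B * B, fun m k => ?_⟩
  rcases lt_or_ge m k with hmk | hkm
  · rw [gaussBinom_eq_zero_of_lt hmk, norm_zero]
    positivity
  · obtain ⟨j, rfl⟩ := Nat.exists_eq_add_of_le hkm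
    rw [gaussBinom_add_eq_div hp, div_eq_mul_inv, mul_inv, ← mul_assoc, norm_mul, norm_mul]
    gcongr
    · exact hA _ ⟨_, rfl⟩
    · exact hB _ ⟨_, rfl⟩
    · exact hB _ ⟨_, rfl⟩

lemma tendsto_gaussBinom [CompleteSpace K] (hp : ‖p‖ < 1) {ι : Type*} {l : Filter ι}
    {a b : ι → ℕ} (ha : Tendsto a l atTop) (hb : Tendsto b l atTop) :
    Tendsto (fun i => gaussBinom p (a i + b i) (a i)) l (𝓝 (∏' k, (1 - p * p ^ k))⁻¹) := by
  have hP := tendsto_qPoch hp p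
  have h0 := tprod_one_sub_mul_pow_self_ne_zero hp
  have hab : Tendsto (fun i => a i + b i) l atTop :=
    tendsto_atTop_mono (fun i => Nat.le_add_left _ _) hb
  simp only [gaussBinom_add_eq_div hp]
  rw [← div_mul_cancel_left₀ h0]
  exact (hP.comp hab).div ((hP.comp ha).mul (hP.comp hb)) (mul_ne_zero h0 h0)

lemma summable_norm_thetaTerm_natCast (hp : ‖p‖ < 1) (z : K) :
    Summable fun n : ℕ => ‖thetaTerm p z n‖ := by
  refine summable_of_ratio_norm_eventually_le (r := 1 / 2) (by norm_num) ?_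
  have h : Tendsto (fun n : ℕ => ‖p‖ ^ n * ‖z‖) atTop (𝓝 0) := by
    simpa using (tendsto_pow_atTop_nhds_zero_of_lt_one (norm_nonneg p) hp).mul_const ‖z‖
  filter_upwards [h.eventually (ge_mem_nhds one_half_pos)] with n hn
  have hstep : thetaTerm p z (n + 1 : ℕ) = thetaTerm p z n * -(z * p ^ n) := by
    simp only [thetaTerm_natCast, Nat.choose_succ_succ', Nat.choose_one_right, pow_succ,
      pow_add]
    ring
  rw [norm_norm, norm_norm, hstep, norm_mul, norm_neg, norm_mul, norm_pow,
    mul_comm (1 / 2 : ℝ)]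
  gcongr
  linarith

lemma summable_norm_thetaTerm (hp : ‖p‖ < 1) (hp0 : p ≠ 0) (z : K) :
    Summable fun n : ℤ => ‖thetaTerm p z n‖ :=
  .of_nat_of_neg (summable_norm_thetaTerm_natCast hp z) (by
    simpa only [thetaTerm_neg hp0] using summable_norm_thetaTerm_natCast hp (p * z⁻¹))

theorem tsum_thetaTerm [CompleteSpace K] (hp : ‖p‖ < 1) (hp0 : p ≠ 0) {z : K} (hz : z ≠ 0) :
    ∑' n, thetaTerm p z n = (∏' k, (1 - p * p ^ k)) * (∏' k, (1 - z * p ^ k)) *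
      ∏' k, (1 - p * z⁻¹ * p ^ k) := by
  have h0 := tprod_one_sub_mul_pow_self_ne_zero hp
  obtain ⟨C, hC⟩ := exists_norm_gaussBinom_le hp
  let F : ℕ → ℤ → K := fun N => (Icc (-(N : ℤ)) N : Set ℤ).indicator
    fun n => gaussBinom p (2 * N) (n + N).toNat * thetaTerm p z n
  have hF : ∀ N, ∑' n, F N n = qPoch z p N * qPoch (p * z⁻¹) p N := fun N => by
    rw [qPoch_mul_qPoch_eq_sum_gaussBinom_mul_thetaTerm hp0 hz, sum_eq_tsum_indicator]
  have hlim : ∀ n, Tendsto (fun N => F N n) atTop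
      (𝓝 ((∏' k, (1 - p * p ^ k))⁻¹ * thetaTerm p z n)) := by
    intro n
    have hG : Tendsto (fun N : ℕ => gaussBinom p ((n + N).toNat + (N - n).toNat) (n + N).toNat)
        atTop (𝓝 (∏' k, (1 - p * p ^ k))⁻¹) :=
      tendsto_gaussBinom hp
        (tendsto_atTop_atTop.mpr fun b => ⟨b + n.natAbs, fun N hN => by omega⟩)
        (tendsto_atTop_atTop.mpr fun b => ⟨b + n.natAbs, fun N hN => by omega⟩)
    refine (hG.mul_const _).congr' ?_
    filter_upwards [eventually_ge_atTop n.natAbs] with N hN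
    have hn : n ∈ (Icc (-(N : ℤ)) N : Set ℤ) := by simp only [coe_Icc, Set.mem_Icc]; omega
    have hsum : (n + N).toNat + (N - n).toNat = 2 * N := by omega
    simp only [F, Set.indicator_of_mem hn, hsum]
  have hbound : ∀ N n, ‖F N n‖ ≤ C * ‖thetaTerm p z n‖ := fun N n =>
    (norm_indicator_le_norm_self _ _).trans (by rw [norm_mul]; gcongr; exact hC _ _)
  have h1 := tendsto_tsum_of_dominated_convergence
    ((summable_norm_thetaTerm hp hp0 z).mul_left C) hlim (.of_forall hbound)
  have h2 := (tendsto_qPoch hp z).mul (tendsto_qPoch hp (p * z⁻¹))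
  simp only [← hF] at h2
  rw [tsum_mul_left] at h1
  rw [mul_assoc, ← tendsto_nhds_unique h1 h2, mul_inv_cancel_left₀ h0]

end Analysis

/-- Jacobi triple product: `Θ_q(z) = (p;p)_∞ (z;p)_∞ (p z⁻¹;p)_∞` with `p = q⁻¹`, `|q| > 1`. -/
theorem jacobi_triple_product (q : ℂ) (hq : 1 < ‖q‖) (z : ℂ) (hz : z ≠ 0) :
    jTheta q z = qPochInf q⁻¹ q⁻¹ * qPochInf z q⁻¹ * qPochInf (q⁻¹ * z⁻¹) q⁻¹ := by
  have hq0 : q ≠ 0 := norm_pos_iff.mp (one_pos.trans hq)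
  have hp : ‖q⁻¹‖ < 1 := by rw [norm_inv]; exact inv_lt_one_of_one_lt₀ hq
  have htheta : jTheta q z = ∑' n, thetaTerm q⁻¹ z n :=
    tsum_congr fun n => by rw [thetaTerm, inv_zpow, zpow_neg]
  rw [htheta, tsum_thetaTerm hp (inv_ne_zero hq0) hz]
  rfl
end

section
/- Let K be a field extension of the field of convergent Laurent series ℂ({z}) equipped with an automorphism σ extending f(z) ↦ f(qz) (|q| > 1, q not a root of unity), and let l ∈ K satisfy σl = l + 1. Then l is transcendental over ℂ({z}); equivalently, the elements l^(k) = binom(l,k), k ≥ 0, are linearly independent over ℂ({z}). -/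
open Polynomial

lemma aux_eval_one_mem (K : Type*) [Field K] (k : Subfield K)
    (q : K[X]) (hq : ∀ i, q.coeff i ∈ k) : q.eval 1 ∈ k := by
  rw [Polynomial.eval_eq_sum_range]
  exact Subfield.sum_mem k fun i _ => by
    simpa using k.mul_mem (hq i) (k.pow_mem k.one_mem i)

lemma aux_taylor_coeff_mem (K : Type*) [Field K] (k : Subfield K)
    (q : K[X]) (hq : ∀ i, q.coeff i ∈ k) (i : ℕ) : (taylor 1 q).coeff i ∈ k := by
  rw [taylor_coeff]
  refine aux_eval_one_mem K k _ fun j => ?_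
  rw [hasseDeriv_coeff]
  exact k.mul_mem (natCast_mem k _) (hq _)

lemma aux_taylor_coeff_top (K : Type*) [Field K] (q : K[X]) (m : ℕ)
    (h : q.natDegree ≤ m) : (taylor 1 q).coeff m = q.coeff m := by
  rw [taylor_coeff]
  have h0 : (hasseDeriv m q).natDegree = 0 :=
    Nat.le_antisymm ((natDegree_hasseDeriv_le q m).trans (by omega)) (Nat.zero_le _)
  rw [Polynomial.eq_C_of_natDegree_eq_zero h0, eval_C, hasseDeriv_coeff]
  simp

lemma aux_taylor_coeff_next (K : Type*) [Field K] (q : K[X]) (n : ℕ)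
    (hd : q.natDegree ≤ n) (hn : 1 ≤ n) :
    (taylor 1 q).coeff (n - 1) = q.coeff (n - 1) + n * q.coeff n := by
  rw [taylor_coeff]
  have hlt : (hasseDeriv (n - 1) q).natDegree < 2 :=
    lt_of_le_of_lt (natDegree_hasseDeriv_le q (n - 1)) (by omega)
  rw [Polynomial.eval_eq_sum_range' hlt]
  rw [Finset.sum_range_succ, Finset.sum_range_one]
  rw [hasseDeriv_coeff, hasseDeriv_coeff]
  have h1 : 0 + (n - 1) = n - 1 := by omega
  have h2 : 1 + (n - 1) = n := by omega
  rw [h1, h2, Nat.choose_self]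
  have h3 : n.choose (n - 1) = n := by
    have hs := Nat.choose_symm (Nat.sub_le n 1)
    have h4 : n - (n - 1) = 1 := by omega
    rw [h4] at hs
    rw [← hs, Nat.choose_one_right]
  rw [h3]
  ring


/-- Transcendence of the `q`-logarithm.  Abstract version: let `K` be a field (of
characteristic zero) extending the field `k = ℂ({z})` of convergent Laurent series,
endowed with an automorphism `σ` extending `f(z) ↦ f(qz)` (`|q| > 1`, `q` not a root of
unity).  The two properties of the base field actually used are that it is `σ`-stable and
that the equation `σ f = f + 1` has no solution in it (for `ℂ({z})` this holds by
comparing constant Laurent coefficients).  If `l ∈ K` satisfies `σ l = l + 1`, then `l` is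
transcendental over `k`: no nonzero polynomial with coefficients in `k` annihilates `l`
(equivalently the binomials `l^(k)` are linearly independent over `k`). -/
theorem lq_transcendental_over_base
    (K : Type*) [Field K] [CharZero K] (σ : K ≃+* K) (k : Subfield K)
    (hinv : ∀ x ∈ k, σ x ∈ k)
    (hbase : ∀ f ∈ k, σ f ≠ f + 1)
    (l : K) (hl : σ l = l + 1) :
    ∀ p : Polynomial K, (∀ i, p.coeff i ∈ k) → Polynomial.eval l p = 0 → p = 0 := by
  suffices H : ∀ n (p : Polynomial K), p.natDegree = n →
      (∀ i, p.coeff i ∈ k) → Polynomial.eval l p = 0 → p = 0 by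
    exact fun p hc he => H p.natDegree p rfl hc he
  intro n
  induction n using Nat.strong_induction_on with
  | _ n IH =>
    intro p hdeg hc he
    by_contra hp
    -- n ≥ 1
    have hn : 1 ≤ n := by
      rcases Nat.eq_zero_or_pos n with h0 | h1
      · exact absurd (by
          have := Polynomial.eq_C_of_natDegree_eq_zero (hdeg.trans h0)
          rw [this] at he ⊢
          rw [eval_C] at he
          rw [he, map_zero]) hp
      · exact h1
    -- make monic
    set P : Polynomial K := p * C (leadingCoeff p)⁻¹ with hP
    have hPm : P.Monic := monic_mul_leadingCoeff_inv hp
    have hPdeg : P.natDegree = n := by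
      have := degree_mul_leadingCoeff_inv p (q := p) hp
      rw [← hdeg]
      exact natDegree_eq_of_degree_eq this
    have hPc : ∀ i, P.coeff i ∈ k := by
      intro i
      rw [hP, coeff_mul_C]
      exact k.mul_mem (hc i) (k.inv_mem (hc _))
    have hPe : Polynomial.eval l P = 0 := by
      rw [hP, eval_mul, he, zero_mul]
    have hP0 : P ≠ 0 := hPm.ne_zero
    -- the twisted polynomial
    set Q : Polynomial K := P.map (σ : K →+* K) with hQ
    have hQdeg : Q.natDegree = n := by
      rw [hQ, Polynomial.natDegree_map_eq_of_injective (RingEquiv.injective σ), hPdeg]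
    have hQc : ∀ i, Q.coeff i ∈ k := by
      intro i; rw [hQ, coeff_map]; exact hinv _ (hPc i)
    have hQm : Q.Monic := hPm.map _
    set R : Polynomial K := taylor 1 Q with hR
    have hRdeg : R.natDegree = n := by rw [hR, natDegree_taylor, hQdeg]
    have hRc : ∀ i, R.coeff i ∈ k := fun i => aux_taylor_coeff_mem K k Q hQc i
    have hRe : Polynomial.eval l R = 0 := by
      rw [hR, Polynomial.taylor_apply, eval_comp]
      have hx : Polynomial.eval l (X + C 1) = σ l := by
        rw [hl]; simp
      rw [hx, hQ, Polynomial.eval_map]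
      rw [show σ l = (σ : K →+* K) l from rfl, Polynomial.eval₂_at_apply, hPe, map_zero]
    have hRlc : R.coeff n = 1 := by
      rw [hR, aux_taylor_coeff_top K Q n hQdeg.le]
      have := hQm.leadingCoeff
      rwa [leadingCoeff, hQdeg] at this
    -- R - P has smaller degree, eval 0, so R = P
    have hRP : R = P := by
      by_contra hne
      have hsub : R - P ≠ 0 := sub_ne_zero.mpr hne
      have hR0 : R ≠ 0 := by
        intro h; rw [h] at hRdeg; simp at hRdeg; omega
      have hdlt : (R - P).degree < R.degree := by
        apply degree_sub_lt
        · rw [degree_eq_natDegree hP0, degree_eq_natDegree hR0, hRdeg, hPdeg]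
        · exact hR0
        · rw [leadingCoeff, leadingCoeff, hRdeg, hPdeg, hRlc]
          have := hPm.leadingCoeff
          rw [leadingCoeff, hPdeg] at this
          exact this.symm
      have hnlt : (R - P).natDegree < n := by
        rw [← hRdeg]
        exact natDegree_lt_natDegree hsub hdlt
      have := IH _ hnlt (R - P) rfl (fun i => by
        rw [coeff_sub]; exact k.sub_mem (hRc i) (hPc i))
        (by rw [eval_sub, hRe, hPe, sub_zero])
      exact hsub this
    -- compare coefficients at n-1
    have hkey : R.coeff (n - 1) = σ (P.coeff (n - 1)) + n := by
      rw [hR, aux_taylor_coeff_next K Q n hQdeg.le hn, hQ, coeff_map, coeff_map]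
      have : P.coeff n = 1 := by
        have := hPm.leadingCoeff; rwa [leadingCoeff, hPdeg] at this
      rw [this, map_one, mul_one]
      rfl
    set a : K := P.coeff (n - 1) with ha
    have hak : a ∈ k := hPc _
    have heq : σ a + (n : K) = a := by
      have h5 := hkey
      rw [hRP, ← ha] at h5
      exact h5.symm
    -- contradiction with hbase
    have hn0 : (n : K) ≠ 0 := Nat.cast_ne_zero.mpr (by omega)
    set f : K := -a / n with hf
    have hfk : f ∈ k := by
      rw [hf]
      exact k.div_mem (k.neg_mem hak) (natCast_mem k n)
    apply hbase f hfk
    have hσa : σ a = a - (n : K) := by linear_combination heq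
    rw [hf, map_div₀, map_neg, map_natCast, hσa]
    field_simp
    ring
end

section
/- With K ⊇ ℂ({z}) and σ extending σ_q as above, and l ∈ K with σl = l + 1: the only f ∈ ℂ({z})(l) nonzero with σf = cf for some c ∈ ℂ* are f = a·z^n with a ∈ ℂ*, n ∈ ℤ, and then c = q^n. -/
/-!
Let `τ` be the restriction of `σ` to the constants `K`; on `K[X]` the automorphism `σ` acts as
`p ↦ p^τ(X + 1)`, which preserves degrees and monicity. Comparing reduced fractions in
`σ F = c F` shows that the denominator of `F` is fixed and the numerator is an eigenvector. An
eigenvector of degree `d ≥ 1`, differentiated `d - 1` times, gives one of the form `a X + b`, and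
then `-b/a` solves `τ x = x + 1`, which is impossible in `K` (look at the constant coefficient).
Hence `F = a ∈ K` with `q^n a_n = c a_n` for all `n`, and since `n ↦ q^n` is injective
(`|q| > 1`), `a` is a single monomial.
-/
open Polynomial

namespace RingHom

theorem exists_comp_eq_of_forall_mem_range {R S : Type*} [Ring R] [Ring S] (i : R →+* S)
    (hi : Function.Injective i) (f : S →+* S) (hf : ∀ a, f (i a) ∈ i.range) :
    ∃ g : R →+* R, ∀ a, f (i a) = i (g a) := by
  let e := RingEquiv.ofLeftInverse (Function.leftInverse_invFun hi)
  refine ⟨e.symm.toRingHom.comp ((f.comp i).codRestrict i.range hf), fun a => ?_⟩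
  change f (i a) = (e (e.symm _) : S)
  rw [RingEquiv.apply_symm_apply]
  rfl

end RingHom

namespace Polynomial

section CommRing

variable {R : Type*} [CommRing R] (τ : R →+* R)

noncomputable def shiftMap : R[X] →+* R[X] :=
  (taylorAlgHom (1 : R) : R[X] →+* R[X]).comp (mapRingHom τ)

theorem shiftMap_apply (p : R[X]) : shiftMap τ p = taylor 1 (p.map τ) := rfl

@[simp] theorem shiftMap_C (a : R) : shiftMap τ (C a) = C (τ a) := by
  simp [shiftMap_apply]

@[simp] theorem shiftMap_X : shiftMap τ X = X + 1 := by
  simp [shiftMap_apply, taylor_X]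

theorem derivative_shiftMap (p : R[X]) :
    derivative (shiftMap τ p) = shiftMap τ (derivative p) := by
  simp [shiftMap_apply, taylor_apply, derivative_comp, derivative_map]

end CommRing

variable {K : Type*} [Field K] (τ : K →+* K)

@[simp] theorem natDegree_shiftMap (p : K[X]) : (shiftMap τ p).natDegree = p.natDegree := by
  rw [shiftMap_apply, natDegree_taylor, natDegree_map]

@[simp] theorem leadingCoeff_shiftMap (p : K[X]) :
    (shiftMap τ p).leadingCoeff = τ p.leadingCoeff := by
  rw [shiftMap_apply, leadingCoeff_taylor, leadingCoeff_map]

theorem Monic.shiftMap {p : K[X]} (hp : p.Monic) : (shiftMap τ p).Monic := by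
  rw [Monic, leadingCoeff_shiftMap, hp.leadingCoeff, map_one]

theorem shiftMap_derivative_eq_C_mul {p : K[X]} {u : K} (h : shiftMap τ p = C u * p) :
    shiftMap τ (derivative p) = C u * derivative p := by
  rw [← derivative_shiftMap, h, derivative_C_mul]

theorem exists_map_eq_add_one_of_shiftMap_eq_C_mul {p : K[X]} {u : K} (hp : p.natDegree = 1)
    (h : shiftMap τ p = C u * p) : ∃ b, τ b = b + 1 := by
  set a := p.coeff 1
  set b := p.coeff 0
  have hp0 : p ≠ 0 := by rintro rfl; simp at hp
  have ha : a ≠ 0 := by simpa [leadingCoeff, hp] using leadingCoeff_ne_zero.mpr hp0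
  rw [eq_X_add_C_of_natDegree_le_one hp.le] at h
  simp only [map_add, map_mul, shiftMap_C, shiftMap_X] at h
  have h1 : τ a = u * a := by simpa [coeff_one] using congrArg (coeff · 1) h
  have h0 : τ b = u * b - u * a := by
    linear_combination (by simpa using congrArg (coeff · 0) h : τ a + τ b = u * b) - h1
  have hu : u ≠ 0 := left_ne_zero_of_mul (h1 ▸ (_root_.map_ne_zero τ).mpr ha)
  refine ⟨-(b / a), ?_⟩
  rw [map_neg, map_div₀, h0, h1]
  field_simp
  ring

theorem natDegree_eq_zero_of_shiftMap_eq_C_mul [CharZero K] (hτ : ∀ b, τ b ≠ b + 1) {p : K[X]}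
    {u : K} (h : shiftMap τ p = C u * p) : p.natDegree = 0 := by
  suffices ∀ n (p : K[X]), p.natDegree = n + 1 → shiftMap τ p = C u * p → False by
    by_contra hp
    exact this _ p (Nat.succ_pred_eq_of_ne_zero hp).symm h
  intro n
  induction n with
  | zero =>
    intro p hp h
    obtain ⟨b, hb⟩ := exists_map_eq_add_one_of_shiftMap_eq_C_mul τ hp h
    exact hτ b hb
  | succ n ih =>
    intro p hp h
    exact ih (derivative p) (by rw [natDegree_derivative, hp]; rfl)
      (shiftMap_derivative_eq_C_mul τ h)

end Polynomial

namespace RatFunc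

variable {K : Type*} [Field K] {τ : K →+* K} {σ : RatFunc K →+* RatFunc K}

theorem map_algebraMap_eq_shiftMap (hσC : ∀ a, σ (RatFunc.C a) = RatFunc.C (τ a))
    (hσX : σ RatFunc.X = RatFunc.X + 1) (p : K[X]) :
    σ (algebraMap K[X] (RatFunc K) p) = algebraMap K[X] (RatFunc K) (shiftMap τ p) := by
  suffices σ.comp (algebraMap K[X] (RatFunc K)) = (algebraMap K[X] (RatFunc K)).comp (shiftMap τ)
    from DFunLike.congr_fun this p
  refine Polynomial.ringHom_ext (fun a => ?_) ?_
  · simp [hσC]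
  · simp [hσX]

theorem shiftMap_num_mul_denom (hσC : ∀ a, σ (RatFunc.C a) = RatFunc.C (τ a))
    (hσX : σ RatFunc.X = RatFunc.X + 1) {F : RatFunc K} {u : K} (hF : σ F = RatFunc.C u * F) :
    shiftMap τ F.num * F.denom = Polynomial.C u * F.num * shiftMap τ F.denom := by
  have hQ : shiftMap τ F.denom ≠ 0 := (F.monic_denom.shiftMap τ).ne_zero
  rw [← num_div_denom F, map_div₀, map_algebraMap_eq_shiftMap hσC hσX,
    map_algebraMap_eq_shiftMap hσC hσX, ← algebraMap_C, mul_div_assoc', div_eq_div_iff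
    (algebraMap_ne_zero hQ) (algebraMap_ne_zero F.denom_ne_zero)] at hF
  exact algebraMap_injective K (by simpa only [map_mul] using hF)

theorem shiftMap_denom_eq_denom (hσC : ∀ a, σ (RatFunc.C a) = RatFunc.C (τ a))
    (hσX : σ RatFunc.X = RatFunc.X + 1) {F : RatFunc K} {u : K} (hu : u ≠ 0)
    (hF : σ F = RatFunc.C u * F) : shiftMap τ F.denom = F.denom := by
  have hcop : IsCoprime F.denom (Polynomial.C u * F.num) :=
    (isCoprime_mul_unit_left_right (isUnit_C.mpr hu.isUnit) _ _).mpr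
      (isCoprime_num_denom F).symm
  refine eq_of_monic_of_dvd_of_natDegree_le F.monic_denom (F.monic_denom.shiftMap τ)
    (hcop.dvd_of_dvd_mul_right ⟨shiftMap τ F.num, ?_⟩) (natDegree_shiftMap τ _).le
  linear_combination (shiftMap_num_mul_denom hσC hσX hF).symm

theorem exists_eq_C_of_map_eq_C_mul [CharZero K] (hτ : ∀ b, τ b ≠ b + 1)
    (hσC : ∀ a, σ (RatFunc.C a) = RatFunc.C (τ a)) (hσX : σ RatFunc.X = RatFunc.X + 1)
    {F : RatFunc K} {u : K} (hu : u ≠ 0) (hF : σ F = RatFunc.C u * F) :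
    ∃ a, F = RatFunc.C a ∧ τ a = u * a := by
  have hQ := shiftMap_denom_eq_denom hσC hσX hu hF
  have hP : shiftMap τ F.num = Polynomial.C u * F.num := by
    refine mul_right_cancel₀ F.denom_ne_zero ?_
    rw [shiftMap_num_mul_denom hσC hσX hF, hQ]
  have hQ1 : F.denom = 1 := eq_one_of_monic_natDegree_zero F.monic_denom <|
    natDegree_eq_zero_of_shiftMap_eq_C_mul τ hτ (u := 1) (by rw [hQ, map_one, one_mul])
  obtain ⟨a, ha⟩ : ∃ a, F.num = Polynomial.C a :=
    ⟨_, eq_C_of_natDegree_eq_zero (natDegree_eq_zero_of_shiftMap_eq_C_mul τ hτ hP)⟩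
  refine ⟨a, ?_, ?_⟩
  · rw [← num_div_denom F, ha, hQ1, map_one, div_one, algebraMap_C]
  · rw [ha, shiftMap_C, ← Polynomial.C_mul] at hP
    exact Polynomial.C_injective hP

end RatFunc

instance HahnSeries.instCharZero {Γ R : Type*} [AddCommMonoid Γ] [PartialOrder Γ]
    [IsOrderedCancelAddMonoid Γ] [NonAssocSemiring R] [CharZero R] : CharZero (HahnSeries Γ R) :=
  (RingHom.charZero_iff HahnSeries.C_injective).mp ‹_›

theorem zpow_injective_of_one_lt_norm {𝕜 : Type*} [NormedDivisionRing 𝕜] {q : 𝕜}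
    (hq : 1 < ‖q‖) : Function.Injective fun n : ℤ => q ^ n := fun m n h =>
  zpow_right_injective₀ (zero_lt_one.trans hq) hq.ne'
    (by simpa only [norm_zpow] using congrArg norm h)

namespace LaurentSeries

open HahnSeries

variable {k : Type*} [Field k] {q : k} {f g : LaurentSeries k}

theorem ne_add_one_of_coeff_eq_zpow_mul (h : ∀ n, g.coeff n = q ^ n * f.coeff n) :
    g ≠ f + 1 := by
  intro hg
  simpa [hg, HahnSeries.coeff_one] using h 0

theorem eq_single_order_of_coeff_eq_zpow_mul (hq : Function.Injective fun n : ℤ => q ^ n)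
    (h : ∀ n, g.coeff n = q ^ n * f.coeff n) {c : k} (hg : g = HahnSeries.C c * f)
    (hf : f ≠ 0) :
    f = single f.order (f.coeff f.order) ∧ c = q ^ f.order := by
  have hc : ∀ n, q ^ n * f.coeff n = c * f.coeff n := fun n => by
    rw [← h, hg, C_mul_eq_smul, HahnSeries.coeff_smul, smul_eq_mul]
  have hcq : c = q ^ f.order :=
    (mul_right_cancel₀ (mt coeff_order_eq_zero.mp hf) (hc f.order)).symm
  refine ⟨HahnSeries.ext (funext fun n => ?_), hcq⟩
  rw [coeff_single]
  split_ifs with hn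
  · rw [hn]
  · by_contra hfn
    exact hn (hq (mul_right_cancel₀ hfn ((hc n).trans (congrArg (· * _) hcq))))

end LaurentSeries

theorem characters_in_lq_field_general (q : ℂ) (hq : 1 < ‖q‖)
    (σ : RatFunc (LaurentSeries ℂ) ≃+* RatFunc (LaurentSeries ℂ))
    (hσC : ∀ f : LaurentSeries ℂ, ∃ g : LaurentSeries ℂ,
      σ (RatFunc.C f) = RatFunc.C g ∧ ∀ n : ℤ, g.coeff n = q ^ n * f.coeff n)
    (hσX : σ RatFunc.X = RatFunc.X + 1)
    (F : RatFunc (LaurentSeries ℂ)) (hF : F ≠ 0) (c : ℂ) (hc : c ≠ 0)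
    (hFc : σ F = RatFunc.C (HahnSeries.C c) * F) :
    ∃ (a : ℂ) (n : ℤ), a ≠ 0 ∧
      F = RatFunc.C (HahnSeries.C a * HahnSeries.single (1 : ℤ) (1 : ℂ) ^ n) ∧
      c = q ^ n := by
  obtain ⟨τ, hστ⟩ := RingHom.exists_comp_eq_of_forall_mem_range RatFunc.C
    (RingHom.injective _) (σ : RatFunc (LaurentSeries ℂ) →+* RatFunc (LaurentSeries ℂ))
    fun f => (hσC f).imp fun _ hg => hg.1.symm
  have hτ : ∀ f n, (τ f).coeff n = q ^ n * f.coeff n := fun f => by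
    obtain ⟨g, hg, hg_coeff⟩ := hσC f
    rw [RingHom.injective _ ((hστ f).symm.trans hg)]
    exact hg_coeff
  obtain ⟨a, rfl, ha⟩ := RatFunc.exists_eq_C_of_map_eq_C_mul
    (fun b => LaurentSeries.ne_add_one_of_coeff_eq_zpow_mul (hτ b)) hστ hσX
    (HahnSeries.C_ne_zero hc) hFc
  have ha0 : a ≠ 0 := by rintro rfl; exact hF (map_zero _)
  obtain ⟨ha_single, hcq⟩ := LaurentSeries.eq_single_order_of_coeff_eq_zpow_mul
    (zpow_injective_of_one_lt_norm hq) (hτ a) ha ha0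
  refine ⟨a.coeff a.order, a.order, mt HahnSeries.coeff_order_eq_zero.mp ha0, ?_, hcq⟩
  rw [← RatFunc.single_zpow, HahnSeries.C_apply, HahnSeries.single_mul_single, zero_add, mul_one,
    ← ha_single]

/-- The only characters in `ℂ({z})(l)` are the `a·z^n`.  The field `ℂ({z})` of Laurent
series is modelled by `LaurentSeries ℂ`, on which `σ_q` acts by multiplying the `n`-th
coefficient by `q^n` (i.e. `f(z) ↦ f(qz)`); the rational function field `ℂ({z})(l)` in the
transcendental element `l` (with `σ l = l + 1`) is modelled by `RatFunc (LaurentSeries ℂ)`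
with `l = X`.  If `F ≠ 0` satisfies `σ F = c·F` for some `c ∈ ℂ*`, then
`F = a·z^n` with `a ∈ ℂ*`, `n ∈ ℤ`, and `c = q^n`. -/
theorem characters_in_lq_field (q : ℂ) (hq : 1 < ‖q‖)
    (hq' : ∀ n : ℕ, 0 < n → q ^ n ≠ 1)
    (σ : RatFunc (LaurentSeries ℂ) ≃+* RatFunc (LaurentSeries ℂ))
    (hσC : ∀ f : LaurentSeries ℂ, ∃ g : LaurentSeries ℂ,
      σ (RatFunc.C f) = RatFunc.C g ∧ ∀ n : ℤ, g.coeff n = q ^ n * f.coeff n)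
    (hσX : σ RatFunc.X = RatFunc.X + 1)
    (F : RatFunc (LaurentSeries ℂ)) (hF : F ≠ 0) (c : ℂ) (hc : c ≠ 0)
    (hFc : σ F = RatFunc.C (HahnSeries.C c) * F) :
    ∃ (a : ℂ) (n : ℤ), a ≠ 0 ∧
      F = RatFunc.C (HahnSeries.C a * HahnSeries.single (1 : ℤ) (1 : ℂ) ^ n) ∧
      c = q ^ n :=
  characters_in_lq_field_general q hq σ hσC hσX F hF c hc hFc
end

section
/- Let |q| > 1 and A(z) = Σ_{m≥0} A_m z^m a convergent matrix power series with A_0 ∈ GL_n(ℂ) non-resonant (no two distinct eigenvalues of A_0 are congruent mod q^ℤ, and no q^m, m ≥ 1, is an eigenvalue of A_0 relative to itself in the sense that q^m λ ≠ μ for eigenvalues λ, μ). Then there exists a unique formal power series F = I_n + Σ_{m≥1} F_m z^m with F(qz)·A_0 = A(z)·F(z), and this series converges on a neighborhood of 0. -/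
/-
Expanding `F = ∑ F_m z^m` and comparing coefficients in `F(qz) A₀ = A(z) F(z)` gives
`Φ_m(F_m) = A_1 F_{m-1} + ⋯ + A_m F_0` with `Φ_m(X) = q^m X A₀ - A₀ X`, so the `F_m` are determined
recursively as soon as every `Φ_m`, `m ≥ 1`, is invertible; for matrices this is non-resonance, by
Sylvester's argument (`χ_B(D)` is invertible when `B` and `D` have disjoint spectra). Convergence
comes from the uniform bound on `Φ_m⁻¹`: since `|q|^m → ∞`, `‖Φ_m⁻¹‖ ≤ ‖A₀⁻¹‖` for large `m`, and
then the recursion is dominated by a geometric sequence. Uniqueness: a nonzero analytic solution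
`D` of the equation with `D(0) = 0` would be `z^n g(z)` with `n ≥ 1` and `g(0) ≠ 0`, and cancelling
`z^n` gives `Φ_n(g(0)) = 0`.
-/

open Filter Topology Finset

attribute [local instance] Matrix.linftyOpNormedAddCommGroup Matrix.linftyOpNormedRing
  Matrix.linftyOpNormedAlgebra

theorem sum_range_pow_mul_pow_sub_le {r τ : ℝ} (hr : 0 ≤ r) (hτ : 2 * r ≤ τ) (m : ℕ) :
    ∑ k ∈ range (m + 1), r ^ (k + 1) * τ ^ (m - k) ≤ 2 * r * τ ^ m := by
  have hτ0 : 0 ≤ τ := by linarith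
  calc ∑ k ∈ range (m + 1), r ^ (k + 1) * τ ^ (m - k)
      ≤ ∑ k ∈ range (m + 1), r * τ ^ m * (1 / 2) ^ k := by
        refine sum_le_sum fun k hk => ?_
        have hk : k ≤ m := Nat.lt_succ_iff.mp (mem_range.mp hk)
        calc r ^ (k + 1) * τ ^ (m - k) = r * (r ^ k * τ ^ (m - k)) := by ring
          _ ≤ r * ((τ / 2) ^ k * τ ^ (m - k)) := by gcongr; linarith
          _ = r * τ ^ m * (1 / 2) ^ k := by
            rw [div_pow, ← pow_mul_pow_sub τ hk, one_div_pow]; ring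
    _ = r * τ ^ m * ∑ k ∈ range (m + 1), (1 / 2 : ℝ) ^ k := by rw [mul_sum]
    _ ≤ r * τ ^ m * 2 := by gcongr; exact sum_geometric_two_le _
    _ = 2 * r * τ ^ m := by ring

theorem le_geometric_of_le_convolution {u : ℕ → ℝ} {r L : ℝ} (hr : 0 ≤ r) (hL : 0 ≤ L)
    (hu0 : 0 ≤ u 0)
    (hu : ∀ m, u (m + 1) ≤ L * ∑ k ∈ range (m + 1), r ^ (k + 1) * u (m - k)) (m : ℕ) :
    u m ≤ u 0 * (2 * r * (1 + L)) ^ m := by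
  set τ := 2 * r * (1 + L)
  induction m using Nat.strong_induction_on with
  | _ m ih =>
    rcases m with _ | m
    · simp
    calc u (m + 1) ≤ L * ∑ k ∈ range (m + 1), r ^ (k + 1) * u (m - k) := hu m
      _ ≤ L * ∑ k ∈ range (m + 1), r ^ (k + 1) * (u 0 * τ ^ (m - k)) := by
          gcongr with k hk
          exact ih _ (by omega)
      _ = L * u 0 * ∑ k ∈ range (m + 1), r ^ (k + 1) * τ ^ (m - k) := by
          simp only [mul_sum]; exact sum_congr rfl fun k _ => by ring
      _ ≤ L * u 0 * (2 * r * τ ^ m) := by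
          gcongr; exact sum_range_pow_mul_pow_sub_le hr (by nlinarith) m
      _ ≤ u 0 * τ ^ (m + 1) := by
          rw [pow_succ]
          have : 0 ≤ u 0 * τ ^ m := by positivity
          nlinarith

section NormedAlgebra

variable {𝕜 E : Type*} [NontriviallyNormedField 𝕜] [NormedRing E] [NormedAlgebra 𝕜 E]

noncomputable def qSylvester (q : 𝕜) (a : E) (m : ℕ) : E →L[𝕜] E :=
  q ^ m • (ContinuousLinearMap.mul 𝕜 E).flip a - ContinuousLinearMap.mul 𝕜 E a

@[simp]
theorem qSylvester_apply (q : 𝕜) (a : E) (m : ℕ) (X : E) :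
    qSylvester q a m X = q ^ m • (X * a) - a * X := rfl

theorem apply_ringInverse_apply {f : E →L[𝕜] E} (hf : IsUnit f) (X : E) :
    f (Ring.inverse f X) = X := by
  rw [← mul_apply_eq_comp, Ring.mul_inverse_cancel f hf, one_apply_eq_self]

theorem norm_le_of_qSylvester_apply_eq {q : 𝕜} {a b X Y : E} {m : ℕ} (hab : a * b = 1)
    (hm : ‖a‖ * ‖b‖ + 1 ≤ ‖q‖ ^ m) (h : qSylvester q a m Y = X) : ‖Y‖ ≤ ‖b‖ * ‖X‖ := by
  have hY : q ^ m • Y = (X + a * Y) * b := by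
    rw [← h, qSylvester_apply, sub_add_cancel, smul_mul_assoc, mul_assoc, hab, mul_one]
  have hle : ‖q‖ ^ m * ‖Y‖ ≤ (‖X‖ + ‖a‖ * ‖Y‖) * ‖b‖ := by
    calc ‖q‖ ^ m * ‖Y‖ = ‖(X + a * Y) * b‖ := by rw [← hY, norm_smul, norm_pow]
      _ ≤ ‖X + a * Y‖ * ‖b‖ := norm_mul_le _ _
      _ ≤ (‖X‖ + ‖a‖ * ‖Y‖) * ‖b‖ := by
        gcongr; exact (norm_add_le _ _).trans (by gcongr; exact norm_mul_le _ _)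
  nlinarith [norm_nonneg Y, norm_nonneg b, norm_nonneg X]

theorem bddAbove_range_norm_inverse_qSylvester {q : 𝕜} {a : E} (hq : 1 < ‖q‖) (ha : IsUnit a)
    (hΦ : ∀ m, 1 ≤ m → IsUnit (qSylvester q a m)) :
    BddAbove (Set.range fun m => ‖Ring.inverse (qSylvester q a m)‖) := by
  obtain ⟨b, hab⟩ : ∃ b, a * b = 1 := ⟨_, ha.mul_val_inv⟩
  refine IsBoundedUnder.bddAbove_range ⟨‖b‖, eventually_map.mpr ?_⟩
  have hlarge : ∀ᶠ m in atTop, ‖a‖ * ‖b‖ + 1 ≤ ‖q‖ ^ m :=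
    (tendsto_pow_atTop_atTop_of_one_lt hq).eventually_ge_atTop _
  filter_upwards [hlarge, eventually_ge_atTop 1] with m hm hm1
  refine ContinuousLinearMap.opNorm_le_bound _ (norm_nonneg b) fun X => ?_
  exact norm_le_of_qSylvester_apply_eq hab hm (apply_ringInverse_apply (hΦ m hm1) X)

theorem ContinuousLinearMap.isUnit_of_injective [CompleteSpace E] [FiniteDimensional 𝕜 E]
    {f : E →L[𝕜] E} (hf : Function.Injective f) : IsUnit f :=
  ContinuousLinearMap.isUnit_iff_bijective.mpr
    ⟨hf, (LinearMap.injective_iff_surjective (f := (f : E →ₗ[𝕜] E))).mp hf⟩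

/-- `F_m = Φ_m⁻¹ (a_1 F_{m-1} + ⋯ + a_m F_0)`. Since `Ring.inverse` is `0` at a non-invertible
`Φ_m`, this is the intended recursion only when every `Φ_m`, `m ≥ 1`, is invertible. -/
noncomputable def gaugeCoeff (q : 𝕜) (a : ℕ → E) : ℕ → E
  | 0 => 1
  | m + 1 => Ring.inverse (qSylvester q (a 0) (m + 1))
      (∑ k ∈ range (m + 1), a (k + 1) * gaugeCoeff q a (m - k))
  decreasing_by omega

theorem gaugeCoeff_zero (q : 𝕜) (a : ℕ → E) : gaugeCoeff q a 0 = 1 := by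
  rw [gaugeCoeff]

theorem gaugeCoeff_succ (q : 𝕜) (a : ℕ → E) (m : ℕ) :
    gaugeCoeff q a (m + 1) = Ring.inverse (qSylvester q (a 0) (m + 1))
      (∑ k ∈ range (m + 1), a (k + 1) * gaugeCoeff q a (m - k)) := by
  rw [gaugeCoeff]

theorem smul_gaugeCoeff_mul {q : 𝕜} {a : ℕ → E}
    (hΦ : ∀ m, 1 ≤ m → IsUnit (qSylvester q (a 0) m)) (m : ℕ) :
    q ^ m • (gaugeCoeff q a m * a 0) = ∑ kl ∈ antidiagonal m, a kl.1 * gaugeCoeff q a kl.2 := by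
  rcases m with _ | m
  · simp [gaugeCoeff_zero]
  have hsolve : qSylvester q (a 0) (m + 1) (gaugeCoeff q a (m + 1))
      = ∑ k ∈ range (m + 1), a (k + 1) * gaugeCoeff q a (m - k) := by
    rw [gaugeCoeff_succ, apply_ringInverse_apply (hΦ _ le_add_self)]
  rw [Nat.sum_antidiagonal_succ,
    Nat.sum_antidiagonal_eq_sum_range_succ (fun i j => a (i + 1) * gaugeCoeff q a j), ← hsolve,
    qSylvester_apply, add_sub_cancel]

theorem exists_norm_gaugeCoeff_le {q : 𝕜} {a : ℕ → E} {Ka ra : ℝ} (hra : 0 < ra)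
    (ha : ∀ m, ‖a m‖ ≤ Ka * ra ^ m)
    (hΦ : BddAbove (Set.range fun m => ‖Ring.inverse (qSylvester q (a 0) m)‖)) :
    ∃ τ, 0 < τ ∧ ∀ m, ‖gaugeCoeff q a m‖ ≤ ‖(1 : E)‖ * τ ^ m := by
  obtain ⟨K, hK⟩ := hΦ
  have hK : ∀ m, ‖Ring.inverse (qSylvester q (a 0) m)‖ ≤ K := fun m => hK ⟨m, rfl⟩
  have hK0 : 0 ≤ K := (norm_nonneg _).trans (hK 0)
  have hKa : 0 ≤ Ka := (norm_nonneg (a 0)).trans (by simpa using ha 0)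
  refine ⟨2 * ra * (1 + K * Ka), by positivity, fun m => ?_⟩
  rw [← gaugeCoeff_zero q a]
  refine le_geometric_of_le_convolution (u := fun m => ‖gaugeCoeff q a m‖) hra.le
    (by positivity)
    (norm_nonneg _) (fun m => ?_) m
  calc ‖gaugeCoeff q a (m + 1)‖
      ≤ K * ‖∑ k ∈ range (m + 1), a (k + 1) * gaugeCoeff q a (m - k)‖ := by
        rw [gaugeCoeff_succ]
        exact (ContinuousLinearMap.le_opNorm _ _).trans (by gcongr; exact hK _)
    _ ≤ K * ∑ k ∈ range (m + 1), Ka * ra ^ (k + 1) * ‖gaugeCoeff q a (m - k)‖ := by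
        gcongr
        refine (norm_sum_le _ _).trans (sum_le_sum fun k _ => ?_)
        exact (norm_mul_le _ _).trans (by gcongr; exact ha _)
    _ = K * Ka * ∑ k ∈ range (m + 1), ra ^ (k + 1) * ‖gaugeCoeff q a (m - k)‖ := by
        simp only [mul_sum, mul_assoc]

theorem summable_norm_pow_smul {c : ℕ → E} {K r : ℝ} (hr : 0 ≤ r)
    (hc : ∀ m, ‖c m‖ ≤ K * r ^ m) {z : 𝕜} (hz : ‖z‖ * r < 1) :
    Summable fun m => ‖z ^ m • c m‖ := by
  refine Summable.of_nonneg_of_le (fun m => norm_nonneg _) (fun m => ?_)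
    ((summable_geometric_of_lt_one (by positivity) hz).mul_left K)
  calc ‖z ^ m • c m‖ = ‖z‖ ^ m * ‖c m‖ := by rw [norm_smul, norm_pow]
    _ ≤ ‖z‖ ^ m * (K * r ^ m) := by gcongr; exact hc m
    _ = K * (‖z‖ * r) ^ m := by ring

theorem eventually_summable_norm_pow_smul {c : ℕ → E} {K r : ℝ} (hr : 0 ≤ r)
    (hc : ∀ m, ‖c m‖ ≤ K * r ^ m) : ∀ᶠ z in 𝓝 (0 : 𝕜), Summable fun m => ‖z ^ m • c m‖ := by
  have h : Tendsto (fun z : 𝕜 => ‖z‖ * r) (𝓝 0) (𝓝 0) :=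
    ((continuous_norm (E := 𝕜)).mul continuous_const).tendsto' _ _ (by simp)
  filter_upwards [h.eventually_lt_const one_pos] with z hz
  exact summable_norm_pow_smul hr hc hz

theorem tsum_zero_pow_smul (c : ℕ → E) : ∑' m, (0 : 𝕜) ^ m • c m = c 0 := by
  rw [tsum_eq_single 0 fun m hm => by rw [zero_pow hm, zero_smul], pow_zero, one_smul]

theorem tsum_pow_smul_mul_tsum_pow_smul [CompleteSpace E] {c d : ℕ → E} {z : 𝕜}
    (hc : Summable fun m => ‖z ^ m • c m‖) (hd : Summable fun m => ‖z ^ m • d m‖) :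
    (∑' m, z ^ m • c m) * (∑' m, z ^ m • d m)
      = ∑' m, z ^ m • ∑ kl ∈ antidiagonal m, c kl.1 * d kl.2 := by
  rw [tsum_mul_tsum_eq_tsum_sum_antidiagonal_of_summable_norm hc hd]
  refine tsum_congr fun m => ?_
  rw [smul_sum]
  refine sum_congr rfl fun kl hkl => ?_
  rw [smul_mul_smul_comm, ← pow_add, mem_antidiagonal.mp hkl]

theorem analyticAt_tsum_pow_smul [CompleteSpace E] {c : ℕ → E} {K r : ℝ} (hr : 0 < r)
    (hc : ∀ m, ‖c m‖ ≤ K * r ^ m) : AnalyticAt 𝕜 (fun z : 𝕜 => ∑' m, z ^ m • c m) 0 := by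
  let p : FormalMultilinearSeries 𝕜 𝕜 E := fun m =>
    ContinuousMultilinearMap.mkPiRing 𝕜 (Fin m) (c m)
  have hp : ∀ m, p.coeff m = c m := fun m => by simp [p, FormalMultilinearSeries.coeff]
  have hrad : ((Real.toNNReal r⁻¹ : NNReal) : ENNReal) ≤ p.radius := by
    refine p.le_radius_of_bound K fun m => ?_
    rw [p.norm_apply_eq_norm_coef, hp, Real.coe_toNNReal _ (by positivity), inv_pow]
    calc ‖c m‖ * (r ^ m)⁻¹ ≤ K * r ^ m * (r ^ m)⁻¹ := by gcongr; exact hc m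
      _ = K := by field_simp
  have hball := p.hasFPowerSeriesOnBall (lt_of_lt_of_le (by simpa using hr) hrad)
  refine ⟨p, hball.hasFPowerSeriesAt.congr (Eventually.of_forall fun z => ?_)⟩
  simp only [FormalMultilinearSeries.sum, p.apply_eq_pow_smul_coeff, hp]

theorem AnalyticAt.exists_eventuallyEq_tsum_pow_smul [CompleteSpace E] {f : 𝕜 → E}
    (hf : AnalyticAt 𝕜 f 0) :
    ∃ (c : ℕ → E) (K r : ℝ), 0 < r ∧ (∀ m, ‖c m‖ ≤ K * r ^ m) ∧
      ∀ᶠ z in 𝓝 (0 : 𝕜), f z = ∑' m, z ^ m • c m := by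
  obtain ⟨p, hp⟩ := hf
  obtain ⟨r, hr0, hr⟩ := ENNReal.lt_iff_exists_nnreal_btwn.mp hp.radius_pos
  have hr0 : 0 < r := by exact_mod_cast hr0
  obtain ⟨C, -, hC⟩ := p.norm_le_div_pow_of_pos_of_lt_radius hr0 hr
  refine ⟨p.coeff, C, (r : ℝ)⁻¹, by positivity, fun m => ?_, ?_⟩
  · rw [← p.norm_apply_eq_norm_coef, inv_pow, ← div_eq_mul_inv]
    exact hC m
  · filter_upwards [hp.eventually_hasSum] with z hz
    simpa [p.apply_eq_pow_smul_coeff] using hz.tsum_eq.symm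

theorem exists_analyticAt_gauge_of_isUnit_qSylvester [CompleteSpace E] {q : 𝕜} (hq : 1 < ‖q‖)
    {A : 𝕜 → E} (hA : AnalyticAt 𝕜 A 0) (hA0 : IsUnit (A 0))
    (hΦ : ∀ m, 1 ≤ m → IsUnit (qSylvester q (A 0) m)) :
    ∃ F : 𝕜 → E, AnalyticAt 𝕜 F 0 ∧ F 0 = 1 ∧
      ∀ᶠ z in 𝓝 (0 : 𝕜), F (q * z) * A 0 = A z * F z := by
  obtain ⟨a, Ka, ra, hra, ha, hAa⟩ := hA.exists_eventuallyEq_tsum_pow_smul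
  have ha0 : a 0 = A 0 := by rw [hAa.self_of_nhds, tsum_zero_pow_smul]
  rw [← ha0] at hA0 hΦ ⊢
  obtain ⟨τ, hτ, hf⟩ := exists_norm_gaugeCoeff_le hra ha
    (bddAbove_range_norm_inverse_qSylvester hq hA0 hΦ)
  have hqz : Tendsto (q * ·) (𝓝 (0 : 𝕜)) (𝓝 0) :=
    (continuous_const_mul q).tendsto' 0 0 (mul_zero q)
  refine ⟨fun z => ∑' m, z ^ m • gaugeCoeff q a m, analyticAt_tsum_pow_smul hτ hf,
    (tsum_zero_pow_smul _).trans (gaugeCoeff_zero q a), ?_⟩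
  filter_upwards [hAa, eventually_summable_norm_pow_smul hra.le ha,
    eventually_summable_norm_pow_smul hτ.le hf,
    hqz.eventually (eventually_summable_norm_pow_smul hτ.le hf)] with z hAz hsa hsf hsfq
  rw [hAz, tsum_pow_smul_mul_tsum_pow_smul hsa hsf, ← hsfq.of_norm.tsum_mul_right]
  refine tsum_congr fun m => ?_
  rw [← smul_gaugeCoeff_mul hΦ m, mul_comm q z, mul_pow, smul_mul_assoc, mul_smul]

theorem eventually_eq_zero_of_mul_eq_mul {q : 𝕜} {A D : 𝕜 → E} (hA : ContinuousAt A 0)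
    (hΦ : ∀ m, 1 ≤ m → Function.Injective (qSylvester q (A 0) m))
    (hD : AnalyticAt 𝕜 D 0) (hD0 : D 0 = 0)
    (hDA : ∀ᶠ z in 𝓝 (0 : 𝕜), D (q * z) * A 0 = A z * D z) : ∀ᶠ z in 𝓝 (0 : 𝕜), D z = 0 := by
  by_contra hne
  obtain ⟨n, g, hg, hg0, hDg⟩ := hD.exists_eventuallyEq_pow_smul_nonzero_iff.mpr hne
  simp only [sub_zero] at hDg
  have hn : 1 ≤ n := by
    refine Nat.one_le_iff_ne_zero.mpr fun hn => hg0 ?_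
    simpa [hn, hD0] using hDg.self_of_nhds.symm
  have hqz : Tendsto (q * ·) (𝓝 (0 : 𝕜)) (𝓝 0) :=
    (continuous_const_mul q).tendsto' 0 0 (mul_zero q)
  have hgq : ContinuousAt (fun z => g (q * z)) 0 :=
    ContinuousAt.comp_of_eq hg.continuousAt (continuous_const_mul q).continuousAt (mul_zero q)
  have hpunct : (fun z => q ^ n • (g (q * z) * A 0)) =ᶠ[𝓝[≠] 0] fun z => A z * g z := by
    filter_upwards [nhdsWithin_le_nhds (hDA.and (hDg.and (hqz.eventually hDg))),
      self_mem_nhdsWithin] with z ⟨hz, hDz, hDqz⟩ (hz0 : z ≠ 0)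
    refine smul_right_injective E (pow_ne_zero n hz0) ?_
    rw [hDz, hDqz, mul_pow, mul_smul, smul_mul_assoc, mul_smul_comm, smul_mul_assoc] at hz
    exact (smul_comm _ _ _).trans hz
  have h0 := ((hgq.mul continuousAt_const).const_smul (q ^ n)
    |>.eventuallyEq_nhds_iff_eventuallyEq_nhdsNE (hA.mul hg.continuousAt)).mp hpunct
    |>.self_of_nhds
  refine hg0 ((map_eq_zero_iff _ (hΦ n hn)).mp ?_)
  simpa [sub_eq_zero, mul_zero] using h0

theorem eventuallyEq_of_mul_eq_mul {q : 𝕜} {A F G : 𝕜 → E} (hA : ContinuousAt A 0)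
    (hΦ : ∀ m, 1 ≤ m → Function.Injective (qSylvester q (A 0) m))
    (hF : AnalyticAt 𝕜 F 0) (hG : AnalyticAt 𝕜 G 0) (h0 : F 0 = G 0)
    (hFA : ∀ᶠ z in 𝓝 (0 : 𝕜), F (q * z) * A 0 = A z * F z)
    (hGA : ∀ᶠ z in 𝓝 (0 : 𝕜), G (q * z) * A 0 = A z * G z) : F =ᶠ[𝓝 0] G := by
  have hD := eventually_eq_zero_of_mul_eq_mul hA hΦ (hF.sub hG) (sub_eq_zero.mpr h0) <| by
    filter_upwards [hFA, hGA] with z hFz hGz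
    simp only [Pi.sub_apply, sub_mul, mul_sub, hFz, hGz]
  filter_upwards [hD] with z hz
  exact sub_eq_zero.mp hz

end NormedAlgebra

open Polynomial in
theorem SemiconjBy.aeval {R A : Type*} [CommSemiring R] [Semiring A] [Algebra R A] {M B D : A}
    (h : SemiconjBy M B D) (p : R[X]) : SemiconjBy M (aeval B p) (aeval D p) := by
  induction p using Polynomial.induction_on' with
  | add p r hp hr => simpa only [map_add] using hp.add_right hr
  | monomial k c =>
    simp only [aeval_monomial]
    exact SemiconjBy.mul_right (Algebra.commute_algebraMap_right c M) (h.pow_right k)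

section MatrixSylvester

variable {K ι : Type*} [Field K] [IsAlgClosed K] [Fintype ι] [DecidableEq ι]

theorem Matrix.isUnit_aeval_charpoly_of_disjoint_spectrum {B D : Matrix ι ι K}
    (hBD : Disjoint (spectrum K B) (spectrum K D)) : IsUnit (Polynomial.aeval D B.charpoly) := by
  cases isEmpty_or_nonempty ι
  · exact isUnit_of_subsingleton _
  rw [← spectrum.zero_notMem_iff K, spectrum.map_polynomial_aeval_of_degree_pos _ _
    (by simp [Matrix.charpoly_degree_eq_dim, Fintype.card_pos])]
  rintro ⟨μ, hμD, hμB⟩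
  exact hBD.notMem_of_mem_right hμD (Matrix.mem_spectrum_iff_isRoot_charpoly.mpr hμB)

theorem Matrix.eq_zero_of_semiconjBy_of_disjoint_spectrum {M B D : Matrix ι ι K}
    (hBD : Disjoint (spectrum K B) (spectrum K D)) (h : SemiconjBy M B D) : M = 0 := by
  have hM : Polynomial.aeval D B.charpoly * M = 0 := by
    rw [← (h.aeval B.charpoly).eq, Matrix.aeval_self_charpoly, mul_zero]
  exact (Matrix.isUnit_aeval_charpoly_of_disjoint_spectrum hBD).mul_right_eq_zero.mp hM

end MatrixSylvester

section MatrixAnalytic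

variable {𝕜 ι : Type*} [NontriviallyNormedField 𝕜] [Fintype ι] [DecidableEq ι]

theorem Matrix.analyticAt_iff_entries [CompleteSpace 𝕜] {f : 𝕜 → Matrix ι ι 𝕜} {z : 𝕜} :
    AnalyticAt 𝕜 f z ↔ ∀ i j, AnalyticAt 𝕜 (fun w => f w i j) z := by
  refine ⟨fun hf i j => ?_, fun hf => ?_⟩
  · exact ((Matrix.entryLinearMap 𝕜 𝕜 i j).toContinuousLinearMap.analyticAt _).comp hf
  · have hpi : AnalyticAt 𝕜 (fun w i j => f w i j) z :=
      AnalyticAt.pi fun i => AnalyticAt.pi fun j => hf i j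
    exact ((Matrix.ofLinearEquiv 𝕜).toLinearMap.toContinuousLinearMap.analyticAt _).comp hpi

open scoped Pointwise in
theorem injective_qSylvester_of_nonresonant [IsAlgClosed 𝕜] {q : 𝕜} {a : Matrix ι ι 𝕜} {m : ℕ}
    (hq : q ≠ 0) (hnr : ∀ lam ∈ spectrum 𝕜 a, ∀ mu ∈ spectrum 𝕜 a, q ^ m * lam ≠ mu) :
    Function.Injective (qSylvester q a m) := by
  refine (injective_iff_map_eq_zero _).mpr fun X hX => ?_
  refine Matrix.eq_zero_of_semiconjBy_of_disjoint_spectrum (B := q ^ m • a) (D := a) ?_ ?_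
  · have hspec : spectrum 𝕜 (q ^ m • a) = Units.mk0 _ (pow_ne_zero m hq) • spectrum 𝕜 a :=
      spectrum.unit_smul_eq_smul (R := 𝕜) a (Units.mk0 _ (pow_ne_zero m hq))
    rw [hspec, Set.disjoint_left]
    rintro _ ⟨lam, hlam, rfl⟩ hmu
    exact hnr lam hlam _ hmu rfl
  · rwa [qSylvester_apply, sub_eq_zero, ← mul_smul_comm] at hX

end MatrixAnalytic

/-- Existence, uniqueness and convergence of the gauge transformation to constant
coefficients.  Let `|q| > 1` and `A` be (entrywise) analytic at `0` with `A(0)`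
invertible and non-resonant (`q^m λ ≠ μ` for all `m ∈ ℤ \ {0}` and eigenvalues `λ, μ` of
`A(0)`).  Then there is an analytic-at-`0` matrix function `F` with `F(0) = I` and
`F(qz)·A(0) = A(z)·F(z)` near `0`, unique as a germ at `0` (equivalently, the formal power
series solution is unique and converges). -/
theorem gauge_to_constant_coefficients (n : ℕ) (q : ℂ) (hq : 1 < ‖q‖)
    (A : ℂ → Matrix (Fin n) (Fin n) ℂ)
    (hA : ∀ i j, AnalyticAt ℂ (fun z => A z i j) 0)
    (hA0 : IsUnit (A 0))
    (hnr : ∀ m : ℤ, m ≠ 0 → ∀ lam ∈ spectrum ℂ (A 0), ∀ mu ∈ spectrum ℂ (A 0),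
      q ^ m * lam ≠ mu) :
    ∃ F : ℂ → Matrix (Fin n) (Fin n) ℂ,
      (∀ i j, AnalyticAt ℂ (fun z => F z i j) 0) ∧ F 0 = 1 ∧
      (∀ᶠ z in 𝓝 (0 : ℂ), F (q * z) * A 0 = A z * F z) ∧
      ∀ G : ℂ → Matrix (Fin n) (Fin n) ℂ,
        (∀ i j, AnalyticAt ℂ (fun z => G z i j) 0) → G 0 = 1 →
        (∀ᶠ z in 𝓝 (0 : ℂ), G (q * z) * A 0 = A z * G z) →
        F =ᶠ[𝓝 (0 : ℂ)] G := by
  have hA' : AnalyticAt ℂ A 0 := Matrix.analyticAt_iff_entries.mpr hA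
  have hq0 : q ≠ 0 := norm_pos_iff.mp (one_pos.trans hq)
  have hΦ : ∀ m, 1 ≤ m → Function.Injective (qSylvester q (A 0) m) := fun m hm =>
    injective_qSylvester_of_nonresonant hq0 (by exact_mod_cast hnr m (by omega))
  obtain ⟨F, hF, hF0, hFA⟩ := exists_analyticAt_gauge_of_isUnit_qSylvester hq hA' hA0
    fun m hm => ContinuousLinearMap.isUnit_of_injective (hΦ m hm)
  refine ⟨F, Matrix.analyticAt_iff_entries.mp hF, hF0, hFA, fun G hG hG0 hGA => ?_⟩
  exact eventuallyEq_of_mul_eq_mul hA'.continuousAt hΦ hF (Matrix.analyticAt_iff_entries.mpr hG)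
    (hF0.trans hG0.symm) hFA hGA
end

section
/- Let a ∈ ℂ with Re(a) > 0. Then 1 ≤ |e^a - 1| / (|e^a| - 1) ≤ |a| / Re(a). -/
/-!
Writing `e^z - 1 = z ∫₀¹ e^{sz} ds` and bounding the integrand by `|z| e^{s Re z}` gives
`|e^z - 1| ≤ (|z| / Re z) (e^{Re z} - 1)`; the lower bound is the reverse triangle inequality.
-/

open intervalIntegral

theorem integral_exp_mul {a b x : ℝ} (hx : x ≠ 0) :
    ∫ s in a..b, Real.exp (x * s) = (Real.exp (x * b) - Real.exp (x * a)) / x := by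
  rw [integral_comp_mul_left Real.exp hx, integral_exp, smul_eq_mul, inv_mul_eq_div]

theorem Complex.exp_sub_one_eq_mul_integral (z : ℂ) :
    Complex.exp z - 1 = z * ∫ s in (0 : ℝ)..1, Complex.exp (z * s) := by
  rcases eq_or_ne z 0 with rfl | hz
  · simp
  · rw [integral_exp_mul_complex hz, mul_div_cancel₀ _ hz]
    simp

theorem Complex.norm_exp_sub_one_le_norm_div_re_mul {z : ℂ} (hz : z.re ≠ 0) :
    ‖Complex.exp z - 1‖ ≤ ‖z‖ / z.re * (Real.exp z.re - 1) := by
  have hnorm (s : ℝ) : ‖Complex.exp (z * s)‖ = Real.exp (z.re * s) := by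
    simp [Complex.norm_exp]
  calc ‖Complex.exp z - 1‖ = ‖z‖ * ‖∫ s in (0 : ℝ)..1, Complex.exp (z * s)‖ := by
        rw [Complex.exp_sub_one_eq_mul_integral, norm_mul]
    _ ≤ ‖z‖ * ∫ s in (0 : ℝ)..1, ‖Complex.exp (z * s)‖ := by
        gcongr
        exact norm_integral_le_integral_norm zero_le_one
    _ = ‖z‖ / z.re * (Real.exp z.re - 1) := by
        simp_rw [hnorm, integral_exp_mul hz, mul_one, mul_zero, Real.exp_zero]
        ring

/-- For `a ∈ ℂ` with `Re(a) > 0`: `1 ≤ |e^a - 1| / (|e^a| - 1) ≤ |a| / Re(a)`. -/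
theorem exp_sub_one_abs_bounds (a : ℂ) (ha : 0 < a.re) :
    1 ≤ ‖Complex.exp a - 1‖ / (‖Complex.exp a‖ - 1) ∧
    ‖Complex.exp a - 1‖ / (‖Complex.exp a‖ - 1) ≤
      ‖a‖ / a.re := by
  have hden : 0 < ‖Complex.exp a‖ - 1 := by
    rw [Complex.norm_exp, sub_pos]
    exact Real.one_lt_exp_iff.2 ha
  constructor
  · rw [le_div_iff₀ hden, one_mul]
    simpa using norm_sub_norm_le (Complex.exp a) 1
  · rw [div_le_iff₀ hden, Complex.norm_exp]
    exact Complex.norm_exp_sub_one_le_norm_div_re_mul ha.ne'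
end

section
/- Let τ₀ ∈ ℂ with Im(τ₀) > 0 and q = e^{-2πiτ₀ε}, ε > 0. Then for every integer m ≥ 1: |(q^m - 1)/(q - 1)| ≥ m · Im(τ₀)/|τ₀|. -/
/-!
Write `q = exp a` with `a = -2πiτε`, so that `Re a = 2πε Im τ > 0` and `|a| = 2πε|τ|`; the
claimed constant is then `Re a / |a|`. With `r = |q| = e^{Re a} > 1`, the numerator is at least
`r^m - 1 ≥ m (r - 1)` by the reverse triangle inequality and Bernoulli, while writing
`e^a - 1 = a ∫₀¹ e^{ta} dt` bounds the denominator by `|a| (r - 1) / Re a`.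
-/

open intervalIntegral

theorem integral_exp_mul_real {a b c : ℝ} (hc : c ≠ 0) :
    ∫ x in a..b, Real.exp (c * x) = (Real.exp (c * b) - Real.exp (c * a)) / c := by
  rw [integral_comp_mul_left Real.exp hc, integral_exp, div_eq_inv_mul, smul_eq_mul]

theorem Complex.norm_exp_sub_one_le_of_re_ne_zero {a : ℂ} (ha : a.re ≠ 0) :
    ‖Complex.exp a - 1‖ ≤ ‖a‖ / a.re * (Real.exp a.re - 1) := by
  have ha0 : a ≠ 0 := fun h => by simp [h] at ha
  have hintegral : Complex.exp a - 1 = a * ∫ t in (0 : ℝ)..1, Complex.exp (a * t) := by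
    rw [integral_exp_mul_complex ha0]
    field_simp
    simp
  have hnorm : ‖∫ t in (0 : ℝ)..1, Complex.exp (a * t)‖ ≤ (Real.exp a.re - 1) / a.re := by
    refine (norm_integral_le_integral_norm zero_le_one).trans_eq ?_
    simp [Complex.norm_exp, integral_exp_mul_real ha]
  rw [hintegral, norm_mul, div_mul_eq_mul_div, mul_div_assoc]
  exact mul_le_mul_of_nonneg_left hnorm (norm_nonneg a)

theorem mul_norm_sub_one_le_norm_pow_sub_one {𝕜 : Type*} [NormedDivisionRing 𝕜] {z : 𝕜}
    (hz : 1 ≤ ‖z‖) (m : ℕ) : m * (‖z‖ - 1) ≤ ‖z ^ m - 1‖ := by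
  have hbernoulli := one_add_mul_sub_le_pow (by linarith : (-1 : ℝ) ≤ ‖z‖) m
  have hreverse := norm_sub_norm_le (z ^ m) 1
  rw [norm_pow, norm_one] at hreverse
  linarith

theorem Complex.mul_re_div_norm_le_norm_geom_quotient_exp {a : ℂ} (ha : 0 < a.re) (m : ℕ) :
    m * a.re / ‖a‖ ≤ ‖(Complex.exp a ^ m - 1) / (Complex.exp a - 1)‖ := by
  have hq : 1 < ‖Complex.exp a‖ := by rw [Complex.norm_exp]; exact Real.one_lt_exp_iff.mpr ha
  have hq_ne : Complex.exp a ≠ 1 := fun h => by simp [h] at hq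
  have hr : 0 < Real.exp a.re - 1 := by rw [← Complex.norm_exp]; linarith
  have hden := Complex.norm_exp_sub_one_le_of_re_ne_zero ha.ne'
  have hnum := mul_norm_sub_one_le_norm_pow_sub_one hq.le m
  rw [Complex.norm_exp] at hnum
  calc (m : ℝ) * a.re / ‖a‖ = m * (Real.exp a.re - 1) / (‖a‖ / a.re * (Real.exp a.re - 1)) := by
        field_simp
    _ ≤ ‖Complex.exp a ^ m - 1‖ / ‖Complex.exp a - 1‖ := by
        gcongr
        exact norm_pos_iff.mpr (sub_ne_zero.mpr hq_ne)
    _ = _ := (norm_div _ _).symm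

theorem q_geometric_quotient_lower_bound_general (τ : ℂ) (hτ : 0 < τ.im) (ε : ℝ) (hε : 0 < ε)
    (m : ℕ) :
    (m : ℝ) * τ.im / ‖τ‖ ≤
      ‖(Complex.exp (-2 * (Real.pi : ℂ) * Complex.I * τ * (ε : ℂ)) ^ m - 1) /
        (Complex.exp (-2 * (Real.pi : ℂ) * Complex.I * τ * (ε : ℂ)) - 1)‖ := by
  set a : ℂ := -2 * (Real.pi : ℂ) * Complex.I * τ * (ε : ℂ)
  have hc : 0 < 2 * Real.pi * ε := by positivity
  have ha_re : a.re = 2 * Real.pi * ε * τ.im := by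
    simp [a, Complex.mul_re, Complex.mul_im]
    ring
  have ha_norm : ‖a‖ = 2 * Real.pi * ε * ‖τ‖ := by
    simp [a, abs_of_pos hε, abs_of_pos Real.pi_pos]
    ring
  have hratio : a.re / ‖a‖ = τ.im / ‖τ‖ := by
    rw [ha_re, ha_norm, mul_div_mul_left _ _ hc.ne']
  have hbound := Complex.mul_re_div_norm_le_norm_geom_quotient_exp (by rw [ha_re]; positivity) m
  rwa [mul_div_assoc, hratio, ← mul_div_assoc] at hbound

/-- Let `Im(τ₀) > 0`, `ε > 0` and `q = e^{-2πiτ₀ε}`.  Then for every integer `m ≥ 1`,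
`|(q^m - 1)/(q - 1)| ≥ m·Im(τ₀)/|τ₀|`. -/
theorem q_geometric_quotient_lower_bound (τ : ℂ) (hτ : 0 < τ.im) (ε : ℝ) (hε : 0 < ε)
    (m : ℕ) (hm : 1 ≤ m) :
    (m : ℝ) * τ.im / ‖τ‖ ≤
      ‖(Complex.exp (-2 * (Real.pi : ℂ) * Complex.I * τ * (ε : ℂ)) ^ m - 1) /
        (Complex.exp (-2 * (Real.pi : ℂ) * Complex.I * τ * (ε : ℂ)) - 1)‖ :=
  q_geometric_quotient_lower_bound_general τ hτ ε hε m
end
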